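/- For every k ∈ (-π, π) with k ≠ 0, the half-shift phase functions θ_s(k) = e^{-ik/2} and θ_w(k) = -i·sign(k)·e^{ik/2} satisfy the two-scale relation θ_s(k)·θ_w(2k) = θ_w(k), where θ_w is extended 2π-periodically (so θ_w(2k) means θ_w evaluated at the representative of 2k in (-π, π]). -/
import Mathlib


open Complex Real

/-- Representative of `x` modulo `2π` lying in `(-π, π]`. -/
noncomputable def wrap (x : ℝ) : ℝ := x - 2 * π * ⌈x / (2 * π) - 1 / 2⌉

/-- The half-shift phase `θ_w(x) = -i sign(x) e^{ix/2}` on `(-π,π]`, extended 2π-periodically. -/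
noncomputable def thetaW (x : ℝ) : ℂ :=
  -Complex.I * (Real.sign (wrap x) : ℝ) * Complex.exp (Complex.I * (wrap x) / 2)

lemma wrap_eq_self {x : ℝ} (h1 : -π < x) (h2 : x ≤ π) : wrap x = x := by
  have hπ : (0:ℝ) < π := Real.pi_pos
  have hc : ⌈x / (2 * π) - 1 / 2⌉ = 0 := by
    have hlo : -(1/2 : ℝ) < x / (2*π) := by
      rw [lt_div_iff₀ (by linarith)]; nlinarith
    have hhi : x / (2*π) ≤ 1/2 := by
      rw [div_le_iff₀ (by linarith)]; nlinarith
    rw [Int.ceil_eq_zero_iff]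
    exact ⟨by linarith, by linarith⟩
  unfold wrap
  rw [hc]; push_cast; ring

lemma wrap_of_ceil {x : ℝ} {n : ℤ} (h : ⌈x / (2 * π) - 1 / 2⌉ = n) :
    wrap x = x - 2 * π * n := by unfold wrap; rw [h]

theorem stmt2 (k : ℝ) (hk : k ∈ Set.Ioo (-π) π) (hk0 : k ≠ 0) :
    Complex.exp (-Complex.I * k / 2) * thetaW (2 * k) = thetaW k := by
  obtain ⟨hk1, hk2⟩ := hk
  have hπ : (0:ℝ) < π := Real.pi_pos
  have hwk : wrap k = k := wrap_eq_self hk1 hk2.le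
  unfold thetaW
  rw [hwk]
  rcases lt_or_ge k 0 with hneg | hpos
  · have hsk : Real.sign k = -1 := Real.sign_of_neg hneg
    rcases le_or_gt k (-(π/2)) with h4 | h3
    · -- wrap (2k) = 2k + 2π
      have hc : ⌈(2*k) / (2 * π) - 1 / 2⌉ = -1 := by
        rw [Int.ceil_eq_iff]
        push_cast
        constructor
        · have : -1 < k / π := by rw [lt_div_iff₀ hπ]; linarith
          have h2 : (2*k)/(2*π) = k/π := by field_simp
          rw [h2]; linarith
        · have : k / π ≤ -(1/2) := by
            rw [div_le_iff₀ hπ]; nlinarith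
          have h2 : (2*k)/(2*π) = k/π := by field_simp
          rw [h2]; linarith
      have hw : wrap (2*k) = 2*k + 2*π := by
        rw [wrap_of_ceil hc]; push_cast; ring
      rw [hw]
      have hsgn : Real.sign (2*k + 2*π) = 1 := Real.sign_of_pos (by nlinarith)
      rw [hsgn, hsk]
      have he : Complex.exp (Complex.I * ((2*k + 2*π : ℝ)) / 2)
          = Complex.exp (Complex.I * k) * -1 := by
        rw [show (Complex.I * ((2*k + 2*π : ℝ)) / 2 : ℂ) = Complex.I * k + π * Complex.I by
          push_cast; ring, Complex.exp_add, Complex.exp_pi_mul_I]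
      rw [he]
      rw [show (Complex.exp (-Complex.I * k / 2) * (-Complex.I * ((1:ℝ)) *
          (Complex.exp (Complex.I * k) * -1)) : ℂ)
          = Complex.I * (Complex.exp (-Complex.I * k / 2) * Complex.exp (Complex.I * k)) by
        push_cast; ring, ← Complex.exp_add,
        show (-Complex.I * k / 2 + Complex.I * k : ℂ) = Complex.I * k / 2 by ring]
      push_cast; ring
    · -- wrap (2k) = 2k
      have hw : wrap (2*k) = 2*k := wrap_eq_self (by linarith) (by nlinarith)
      rw [hw]
      have hsgn : Real.sign (2*k) = -1 := Real.sign_of_neg (by linarith)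
      rw [hsgn, hsk]
      rw [show (Complex.exp (-Complex.I * k / 2) * (-Complex.I * ((-1:ℝ)) *
          Complex.exp (Complex.I * ((2*k : ℝ)) / 2)) : ℂ)
          = Complex.I * (Complex.exp (-Complex.I * k / 2) * Complex.exp (Complex.I * k)) by
        push_cast; ring, ← Complex.exp_add,
        show (-Complex.I * k / 2 + Complex.I * k : ℂ) = Complex.I * k / 2 by ring]
      push_cast; ring
  · have hpos' : 0 < k := hpos.lt_of_ne' hk0
    have hsk : Real.sign k = 1 := Real.sign_of_pos hpos'
    rcases le_or_gt k (π/2) with h1 | h2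
    · -- wrap (2k) = 2k
      have hw : wrap (2*k) = 2*k := wrap_eq_self (by nlinarith) (by linarith)
      rw [hw]
      have hsgn : Real.sign (2*k) = 1 := Real.sign_of_pos (by linarith)
      rw [hsgn, hsk]
      rw [show (Complex.exp (-Complex.I * k / 2) * (-Complex.I * ((1:ℝ)) *
          Complex.exp (Complex.I * ((2*k : ℝ)) / 2)) : ℂ)
          = -Complex.I * (Complex.exp (-Complex.I * k / 2) * Complex.exp (Complex.I * k)) by
        push_cast; ring, ← Complex.exp_add,
        show (-Complex.I * k / 2 + Complex.I * k : ℂ) = Complex.I * k / 2 by ring]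
      push_cast; ring
    · -- wrap (2k) = 2k - 2π
      have hc : ⌈(2*k) / (2 * π) - 1 / 2⌉ = 1 := by
        rw [Int.ceil_eq_iff]
        push_cast
        have heq : (2*k)/(2*π) = k/π := by field_simp
        constructor
        · have : 1/2 < k / π := by rw [lt_div_iff₀ hπ]; nlinarith
          rw [heq]; linarith
        · have : k / π < 1 := by rw [div_lt_iff₀ hπ]; nlinarith
          rw [heq]; linarith
      have hw : wrap (2*k) = 2*k - 2*π := by
        rw [wrap_of_ceil hc]; push_cast; ring
      rw [hw]
      have hsgn : Real.sign (2*k - 2*π) = -1 := Real.sign_of_neg (by nlinarith)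
      rw [hsgn, hsk]
      have he : Complex.exp (Complex.I * ((2*k - 2*π : ℝ)) / 2)
          = Complex.exp (Complex.I * k) * -1 := by
        rw [show (Complex.I * ((2*k - 2*π : ℝ)) / 2 : ℂ) = Complex.I * k - π * Complex.I by
          push_cast; ring, Complex.exp_sub, Complex.exp_pi_mul_I, div_neg, div_one, mul_neg_one]
      rw [he]
      rw [show (Complex.exp (-Complex.I * k / 2) * (-Complex.I * ((-1:ℝ)) *
          (Complex.exp (Complex.I * k) * -1)) : ℂ)
          = -Complex.I * (Complex.exp (-Complex.I * k / 2) * Complex.exp (Complex.I * k)) by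
        push_cast; ring, ← Complex.exp_add,
        show (-Complex.I * k / 2 + Complex.I * k : ℂ) = Complex.I * k / 2 by ring]
      push_cast; ring
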